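/- For every real x that is not an integer and every natural number k, the k-th derivative of the function t ↦ ∑_{n=-∞}^{∞} (-1)^n/(t+n) at t = x equals (−1)^k · k! · ∑_{n=-∞}^{∞} (-1)^n/(x+n)^{k+1}; equivalently, the k-th derivative of t ↦ π/sin(πt) at x equals (−1)^k k! ∑_{n∈ℤ} (−1)^n/(x+n)^{k+1}. -/

import Mathlib

/-!
For `k = 0` the claim is the cosecant expansion. It follows from Mathlib's cotangent expansion
through `π / sin (π x) = π cot (π x / 2) - π cot (π x)`: on partial sums, the cotangent sum at
`x / 2` is twice the even-index part of the cotangent sum at `x`, and subtracting the full sum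
at `x` leaves the alternating sum. For `k ≥ 1` the series `∑ (-1)ⁿ / (t + n) ^ (k + 1)`
converge locally uniformly off `ℤ`, so by induction on `k` the symmetric partial sums may be
differentiated term by term.
-/

open Real Filter Finset Topology

theorem sum_Icc_neg_eq_add_sum_range {M : Type*} [AddCommMonoid M] (c : ℤ → M) (N : ℕ) :
    ∑ m ∈ Icc (-(N : ℤ)) N, c m = c 0 + ∑ j ∈ range N, (c (j + 1) + c (-(j + 1))) := by
  induction N with
  | zero => simp
  | succ N ih =>
    have h : Icc (-((N + 1 : ℕ) : ℤ)) (N + 1 : ℕ) =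
        insert (-((N + 1 : ℕ) : ℤ)) (insert ((N + 1 : ℕ) : ℤ) (Icc (-(N : ℤ)) N)) := by
      ext m; simp only [mem_Icc, mem_insert]; omega
    rw [h, sum_insert (by simp only [mem_Icc, mem_insert]; omega),
      sum_insert (by simp only [mem_Icc]; omega), ih, sum_range_succ]
    push_cast
    abel

theorem sum_Icc_neg_filter_even {M : Type*} [AddCommMonoid M] (c : ℤ → M) (N : ℕ) :
    ∑ m ∈ Icc (-(N : ℤ)) N with Even m, c m =
      ∑ j ∈ Icc (-((N / 2 : ℕ) : ℤ)) (N / 2 : ℕ), c (2 * j) := by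
  refine sum_nbij' (· / 2) (2 * ·) ?_ ?_ ?_ ?_ ?_ <;>
    simp only [mem_filter, mem_Icc, Int.even_iff]
  · omega
  · omega
  · intro m hm; omega
  · omega
  · intro m hm; congr; omega

theorem Real.sin_pi_mul_ne_zero {x : ℝ} (hx : x ∉ Set.range ((↑) : ℤ → ℝ)) :
    sin (π * x) ≠ 0 := by
  intro h
  obtain ⟨n, hn⟩ := sin_eq_zero_iff.1 h
  exact hx ⟨n, mul_left_cancel₀ pi_ne_zero (by linarith)⟩

theorem Real.cot_sub_cot_two_mul {a : ℝ} (h : sin (2 * a) ≠ 0) :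
    cot a - cot (2 * a) = 1 / sin (2 * a) := by
  rw [sin_two_mul] at *
  have hs : sin a ≠ 0 := by contrapose! h; simp [h]
  have hc : cos a ≠ 0 := by contrapose! h; simp [h]
  rw [cot_eq_cos_div_sin, cot_eq_cos_div_sin, cos_two_mul, sin_two_mul]
  field_simp
  ring

theorem tendsto_sum_Icc_one_div_add_intCast {x : ℝ} (hx : x ∉ Set.range ((↑) : ℤ → ℝ)) :
    Tendsto (fun N : ℕ => ∑ m ∈ Icc (-(N : ℤ)) N, 1 / (x + m)) atTop (𝓝 (π * cot (π * x))) := by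
  have hxC : (x : ℂ) ∈ Complex.integerComplement := by
    rintro ⟨m, hm⟩
    exact hx ⟨m, by exact_mod_cast hm⟩
  have hC := (tendsto_logDeriv_euler_cot_sub hxC).const_add (1 / (x : ℂ))
  rw [add_sub_cancel] at hC
  rw [← tendsto_ofReal_iff]
  push_cast
  convert hC using 2 with N
  rw [sum_Icc_neg_eq_add_sum_range]
  push_cast
  simp only [cotTerm, add_zero, sub_eq_add_neg, add_comm (1 / (x : ℂ))]
  congr! 2 with j
  ring

theorem sum_Icc_neg_one_zpow_div_add_intCast (x : ℝ) (N : ℕ) :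
    ∑ m ∈ Icc (-(N : ℤ)) N, (-1 : ℝ) ^ m / (x + m) =
      ∑ j ∈ Icc (-((N / 2 : ℕ) : ℤ)) (N / 2 : ℕ), 1 / (x / 2 + j) -
        ∑ m ∈ Icc (-(N : ℤ)) N, 1 / (x + m) := by
  have hterm (m : ℤ) :
      (-1 : ℝ) ^ m / (x + m) + 1 / (x + m) = if Even m then 2 / (x + m) else 0 := by
    split_ifs with hm
    · rw [hm.neg_one_zpow]; ring
    · rw [(Int.not_even_iff_odd.1 hm).neg_one_zpow]; ring
  rw [eq_sub_iff_add_eq, ← sum_add_distrib, sum_congr rfl fun m _ => hterm m, ← sum_filter,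
    sum_Icc_neg_filter_even]
  refine sum_congr rfl fun j _ => ?_
  rw [div_add' _ _ _ two_ne_zero, one_div_div]
  push_cast
  ring

theorem tendsto_sum_Icc_neg_one_zpow_div_add_intCast {x : ℝ}
    (hx : x ∉ Set.range ((↑) : ℤ → ℝ)) :
    Tendsto (fun N : ℕ => ∑ m ∈ Icc (-(N : ℤ)) N, (-1 : ℝ) ^ m / (x + m)) atTop
      (𝓝 (π / sin (π * x))) := by
  have hx2 : x / 2 ∉ Set.range ((↑) : ℤ → ℝ) := by
    rintro ⟨m, hm⟩
    exact hx ⟨2 * m, by push_cast; linarith⟩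
  have hhalf := (tendsto_sum_Icc_one_div_add_intCast hx2).comp
    (Nat.tendsto_div_const_atTop two_ne_zero)
  convert hhalf.sub (tendsto_sum_Icc_one_div_add_intCast hx) using 1
  · ext N
    exact sum_Icc_neg_one_zpow_div_add_intCast x N
  · have h2 : π * x = 2 * (π * (x / 2)) := by ring
    rw [← mul_sub, h2, cot_sub_cot_two_mul (h2 ▸ sin_pi_mul_ne_zero hx), mul_one_div]

theorem exists_pos_le_abs_add_intCast {x : ℝ} (hx : x ∉ Set.range ((↑) : ℤ → ℝ)) :
    ∃ δ > 0, ∀ m : ℤ, δ ≤ |x + m| := by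
  obtain ⟨δ, hδ, hball⟩ := Metric.isOpen_iff.1 isOpen_compl_range_intCast x hx
  refine ⟨δ, hδ, fun m => not_lt.1 fun hm => hball ?_ ⟨-m, rfl⟩⟩
  rwa [Metric.mem_ball, dist_comm, Real.dist_eq, Int.cast_neg, sub_neg_eq_add]

theorem TendstoLocallyUniformlyOn.const_mul {α ι 𝕜 : Type*} [TopologicalSpace α]
    [SeminormedRing 𝕜] {F : ι → α → 𝕜} {f : α → 𝕜} {p : Filter ι} {s : Set α}
    (h : TendstoLocallyUniformlyOn F f p s) (c : 𝕜) :
    TendstoLocallyUniformlyOn (fun n t => c * F n t) (fun t => c * f t) p s :=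
  (uniformContinuous_const_smul c).comp_tendstoLocallyUniformlyOn h

theorem tendstoLocallyUniformlyOn_sum_Icc_neg_one_zpow_div_add_intCast_pow {k : ℕ}
    (hk : 2 ≤ k) :
    TendstoLocallyUniformlyOn
      (fun (N : ℕ) (t : ℝ) => ∑ m ∈ Icc (-(N : ℤ)) N, (-1 : ℝ) ^ m / (t + m) ^ k)
      (fun t => ∑' m : ℤ, (-1 : ℝ) ^ m / (t + m) ^ k) atTop (Set.range ((↑) : ℤ → ℝ))ᶜ := by
  refine tendstoLocallyUniformlyOn_of_forall_exists_nhds fun x hx => ?_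
  obtain ⟨δ, hδ, hxδ⟩ := exists_pos_le_abs_add_intCast hx
  refine ⟨Metric.closedBall x (δ / 2),
    mem_nhdsWithin_of_mem_nhds (Metric.closedBall_mem_nhds x (by positivity)), ?_⟩
  have hsum : Summable fun m : ℤ => 2 ^ k * (1 / |m + x| ^ (k : ℝ)) :=
    ((Real.summable_one_div_int_add_rpow x k).2 (by exact_mod_cast hk)).mul_left _
  have hbound (m : ℤ) (t : ℝ) (ht : t ∈ Metric.closedBall x (δ / 2)) :
      ‖(-1 : ℝ) ^ m / (t + m) ^ k‖ ≤ 2 ^ k * (1 / |m + x| ^ (k : ℝ)) := by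
    rw [Metric.mem_closedBall, Real.dist_eq] at ht
    have hm := hxδ m
    have htm : |x + m| / 2 ≤ |t + m| := by
      have := abs_sub_abs_le_abs_sub (x + m) (t + m)
      rw [show x + m - (t + m) = -(t - x) by ring, abs_neg] at this
      linarith
    rw [norm_div, norm_zpow, norm_neg, norm_one, one_zpow, norm_pow, Real.norm_eq_abs,
      Real.rpow_natCast, add_comm (m : ℝ)]
    calc 1 / |t + m| ^ k ≤ 1 / (|x + m| / 2) ^ k :=
          one_div_le_one_div_of_le (pow_pos (by linarith) k)
            (pow_le_pow_left₀ (by positivity) htm k)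
      _ = 2 ^ k * (1 / |x + m| ^ k) := by rw [div_pow, one_div_div, mul_one_div]
  exact fun u hu => tendsto_Icc_neg.eventually (tendstoUniformlyOn_tsum hsum hbound u hu)

theorem hasDerivAt_div_add_pow {𝕜 : Type*} [NontriviallyNormedField 𝕜] (c a : 𝕜) (k : ℕ)
    {t : 𝕜} (ht : t + a ≠ 0) :
    HasDerivAt (fun t => c / (t + a) ^ (k + 1)) (-(k + 1) * (c / (t + a) ^ (k + 2))) t := by
  have h := ((((hasDerivAt_id' t).add_const a).fun_pow (k + 1)).fun_inv
    (pow_ne_zero _ ht)).const_mul c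
  simp only [← div_eq_mul_inv, Nat.add_sub_cancel, mul_one] at h
  refine h.congr_deriv ?_
  field_simp
  push_cast
  ring

theorem hasDerivAt_sum_neg_one_zpow_div_add_intCast_pow (s : Finset ℤ) (k : ℕ) {t : ℝ}
    (ht : t ∉ Set.range ((↑) : ℤ → ℝ)) :
    HasDerivAt (fun t => ∑ m ∈ s, (-1 : ℝ) ^ m / (t + m) ^ (k + 1))
      (-(k + 1) * ∑ m ∈ s, (-1 : ℝ) ^ m / (t + m) ^ (k + 2)) t := by
  rw [mul_sum]
  refine HasDerivAt.fun_sum fun m _ => hasDerivAt_div_add_pow _ _ k fun h => ht ⟨-m, ?_⟩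
  push_cast
  linarith

theorem iteratedDeriv_csc_sum (x : ℝ) (hx : ∀ m : ℤ, x ≠ m) (k : ℕ) :
    Tendsto (fun N : ℕ =>
        (-1 : ℝ) ^ k * (k.factorial : ℝ) *
          ∑ n ∈ Finset.Icc (-(N : ℤ)) (N : ℤ), (-1 : ℝ) ^ n / (x + n) ^ (k + 1))
      atTop (nhds (iteratedDeriv k (fun t : ℝ => π / Real.sin (π * t)) x)) := by
  replace hx : x ∉ Set.range ((↑) : ℤ → ℝ) := fun ⟨m, hm⟩ => hx m hm.symm
  induction k generalizing x with
  | zero => simpa using tendsto_sum_Icc_neg_one_zpow_div_add_intCast hx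
  | succ k ih =>
    have hconv := (tendstoLocallyUniformlyOn_sum_Icc_neg_one_zpow_div_add_intCast_pow
      (k := k + 2) (by omega)).const_mul ((-1) ^ (k + 1) * ((k + 1).factorial : ℝ))
    have hderiv (N : ℕ) (t : ℝ) (ht : t ∉ Set.range ((↑) : ℤ → ℝ)) :=
      (hasDerivAt_sum_neg_one_zpow_div_add_intCast_pow (Icc (-(N : ℤ)) N) k ht).const_mul
        ((-1) ^ k * (k.factorial : ℝ))
    have key := hasDerivAt_of_tendstoLocallyUniformlyOn isOpen_compl_range_intCast hconv
      (Eventually.of_forall fun N t ht => (hderiv N t ht).congr_deriv ?_) ih hx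
    · rw [iteratedDeriv_succ, key.deriv]
      exact hconv.tendsto_at hx
    · rw [Nat.factorial_succ]
      push_cast
      ring
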